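/- The function s ↦ s·(1 + |ln s|)·K₀(s) is integrable on (0, ∞); that is, ∫₀^∞ s·(1 + |ln s|)·K₀(s) ds < ∞. In particular the attractive Bessel–Macdonald potential satisfies Setô's integrability condition for counting s-wave bound states in two dimensions. -/

import Mathlib

open MeasureTheory Real

/-- The modified Bessel function of the second kind of order zero,
`K₀(x) = ∫₀^∞ exp(−x cosh t) dt`. -/
noncomputable def K0 (x : ℝ) : ℝ := ∫ t in Set.Ioi (0 : ℝ), Real.exp (-x * Real.cosh t)

lemma half_add_one_le_cosh (t : ℝ) : (1 + t) / 2 ≤ Real.cosh t := by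
  rcases le_total t 1 with h | h
  · have h1 := Real.one_le_cosh t
    linarith
  · rw [Real.cosh_eq]
    have he := Real.add_one_le_exp t
    have hp := Real.exp_pos (-t)
    linarith

lemma K0_nonneg (x : ℝ) : 0 ≤ K0 x :=
  integral_nonneg fun _ => (Real.exp_nonneg _)

lemma K0_le {s : ℝ} (hs : 0 < s) : K0 s ≤ 2 / s * Real.exp (-s / 2) := by
  have hs2 : (0:ℝ) < s / 2 := by linarith
  have hgi : Integrable (fun t : ℝ => Real.exp (-(s/2) * (1 + t)))
      (volume.restrict (Set.Ioi (0:ℝ))) := by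
    have : IntegrableOn (fun t : ℝ => Real.exp (-(s/2)) * Real.exp (-(s/2) * t))
        (Set.Ioi (0:ℝ)) volume := (exp_neg_integrableOn_Ioi 0 hs2).const_mul _
    refine this.congr_fun ?_ measurableSet_Ioi
    intro t _
    simp only [← Real.exp_add]
    ring_nf
  have hle : K0 s ≤ ∫ t in Set.Ioi (0:ℝ), Real.exp (-(s/2) * (1 + t)) := by
    refine integral_mono_of_nonneg (Filter.Eventually.of_forall fun t => Real.exp_nonneg _)
      hgi (Filter.Eventually.of_forall fun t => ?_)
    apply Real.exp_le_exp.mpr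
    have h1 := half_add_one_le_cosh t
    nlinarith
  refine hle.trans_eq ?_
  have : (fun t : ℝ => Real.exp (-(s/2) * (1 + t)))
      = (fun t : ℝ => Real.exp (-(s/2)) * Real.exp (-(s/2) * t)) := by
    funext t; rw [← Real.exp_add]; ring_nf
  rw [this, integral_const_mul]
  have hcomp : (∫ t in Set.Ioi (0:ℝ), Real.exp (-((s/2) * t)))
      = (s/2)⁻¹ • ∫ x in Set.Ioi ((s/2) * 0), Real.exp (-x) :=
    integral_comp_mul_left_Ioi (fun x => Real.exp (-x)) 0 hs2
  simp only [neg_mul] at hcomp ⊢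
  rw [hcomp, mul_zero, integral_exp_neg_Ioi]
  rw [smul_eq_mul]
  rw [neg_zero, Real.exp_zero]
  field_simp

lemma K0_aesm : AEStronglyMeasurable (fun s => s * (1 + |Real.log s|) * K0 s)
    (volume.restrict (Set.Ioi (0:ℝ))) := by
  have hK : StronglyMeasurable K0 := by
    have hc : StronglyMeasurable (fun p : ℝ × ℝ => Real.exp (-p.1 * Real.cosh p.2)) :=
      (Continuous.stronglyMeasurable (by fun_prop))
    exact hc.integral_prod_right'
  refine AEStronglyMeasurable.mul ?_ hK.aestronglyMeasurable.restrict
  exact (measurable_id.mul ((measurable_const.add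
    Real.measurable_log.abs))).aestronglyMeasurable.restrict

/-- Setô's integrability condition for counting s-wave bound states in two dimensions
holds for the attractive Bessel–Macdonald potential. -/
theorem besselK0_seto_integrability :
    IntegrableOn (fun s => s * (1 + |Real.log s|) * K0 s) (Set.Ioi (0 : ℝ)) volume := by
  have key : ∀ s : ℝ, 0 < s → s * (1 + |Real.log s|) * K0 s
      ≤ 2 * (1 + |Real.log s|) * Real.exp (-s / 2) := by
    intro s hs
    have h1 : K0 s ≤ 2 / s * Real.exp (-s / 2) := K0_le hs
    have h2 : (0:ℝ) ≤ s * (1 + |Real.log s|) := by positivity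
    calc s * (1 + |Real.log s|) * K0 s
        ≤ s * (1 + |Real.log s|) * (2 / s * Real.exp (-s / 2)) :=
          mul_le_mul_of_nonneg_left h1 h2
      _ = 2 * (1 + |Real.log s|) * Real.exp (-s / 2) := by field_simp
  have hnn : ∀ s : ℝ, 0 < s → 0 ≤ s * (1 + |Real.log s|) * K0 s := by
    intro s hs
    have := K0_nonneg s
    positivity
  rw [← Set.Ioc_union_Ioi_eq_Ioi (zero_le_one (α := ℝ))]
  apply IntegrableOn.union
  · -- on (0, 1]
    have hg : IntegrableOn (fun s : ℝ => 2 + 4 * s ^ (-(1/2) : ℝ)) (Set.Ioc 0 1) volume := by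
      have h1 : IntegrableOn (fun _ : ℝ => (2:ℝ)) (Set.Ioc 0 1) volume :=
        integrableOn_const measure_Ioc_lt_top.ne
      have h2 : IntegrableOn (fun s : ℝ => s ^ (-(1/2) : ℝ)) (Set.Ioc 0 1) volume := by
        have := intervalIntegral.intervalIntegrable_rpow' (a := 0) (b := 1) (r := -(1/2)) (by norm_num)
        rwa [intervalIntegrable_iff_integrableOn_Ioc_of_le zero_le_one] at this
      exact h1.add (h2.const_mul 4)
    refine Integrable.mono hg (K0_aesm.mono_set Set.Ioc_subset_Ioi_self) ?_
    refine (ae_restrict_iff' measurableSet_Ioc).mpr (Filter.Eventually.of_forall ?_)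
    intro s hs
    rcases hs with ⟨hs0, hs1⟩
    have hb := key s hs0
    have hlog : |Real.log s| ≤ 2 * s ^ (-(1/2) : ℝ) := by
      have hlog_neg : Real.log s ≤ 0 := Real.log_nonpos hs0.le hs1
      rw [abs_of_nonpos hlog_neg]
      have hu : (0:ℝ) < s ^ (-(1/2) : ℝ) := Real.rpow_pos_of_pos hs0 _
      have h := Real.log_le_sub_one_of_pos hu
      rw [Real.log_rpow hs0] at h
      linarith
    have hexp : Real.exp (-s / 2) ≤ 1 := by
      apply Real.exp_le_one_iff.mpr; linarith
    have hrw : ‖s * (1 + |Real.log s|) * K0 s‖ = s * (1 + |Real.log s|) * K0 s :=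
      norm_of_nonneg (hnn s hs0)
    rw [hrw, norm_of_nonneg]
    · have h3 : 2 * (1 + |Real.log s|) * Real.exp (-s / 2) ≤ 2 * (1 + |Real.log s|) := by
        nlinarith [abs_nonneg (Real.log s), Real.exp_nonneg (-s/2)]
      nlinarith [Real.rpow_pos_of_pos hs0 (-(1/2) : ℝ)]
    · positivity
  · -- on (1, ∞)
    have hg : IntegrableOn (fun s : ℝ => 16 * Real.exp (-(1/4) * s)) (Set.Ioi 1) volume :=
      (exp_neg_integrableOn_Ioi 1 (by norm_num)).const_mul 16
    refine Integrable.mono hg (K0_aesm.mono_set (Set.Ioi_subset_Ioi zero_le_one)) ?_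
    refine (ae_restrict_iff' measurableSet_Ioi).mpr (Filter.Eventually.of_forall ?_)
    intro s hs
    rw [Set.mem_Ioi] at hs
    have hs0 : (0:ℝ) < s := lt_trans zero_lt_one hs
    have hb := key s hs0
    have hlog : |Real.log s| ≤ s := by
      rw [abs_of_nonneg (Real.log_nonneg hs.le)]
      have := Real.log_le_sub_one_of_pos hs0
      linarith
    have hsle : s ≤ 4 * Real.exp (s / 4) := by
      have := Real.add_one_le_exp (s / 4)
      nlinarith [Real.exp_nonneg (s/4)]
    have hrw : ‖s * (1 + |Real.log s|) * K0 s‖ = s * (1 + |Real.log s|) * K0 s :=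
      norm_of_nonneg (hnn s hs0)
    rw [hrw, norm_of_nonneg (by positivity)]
    have step1 : s * (1 + |Real.log s|) * K0 s ≤ 2 * (1 + s) * Real.exp (-s / 2) := by
      refine hb.trans ?_
      have := Real.exp_nonneg (-s/2)
      nlinarith
    refine step1.trans ?_
    have h1s : 1 + s ≤ 2 * s := by linarith
    have : 2 * (1 + s) * Real.exp (-s / 2) ≤ 4 * s * Real.exp (-s / 2) := by
      nlinarith [Real.exp_nonneg (-s/2)]
    refine this.trans ?_
    have : 4 * s * Real.exp (-s / 2) ≤ 4 * (4 * Real.exp (s / 4)) * Real.exp (-s / 2) := by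
      nlinarith [Real.exp_nonneg (-s/2)]
    refine this.trans ?_
    have hmul : Real.exp (s / 4) * Real.exp (-s / 2) = Real.exp (-(1/4) * s) := by
      rw [← Real.exp_add]; ring_nf
    nlinarith [Real.exp_nonneg (-(1/4) * s)]
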